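/- arXiv:1910.12300 — 2 statements merged into one kernel-verified Lean document; each statement's English description precedes it below -/
import Mathlib

section
/- (Exponential sum over finitely supported sequences) Let $\eta > 0$. There exists $\tau = \tau(\eta) > 0$ such that for every $\rho \in (0,1)$, $\sum_{\ell \in \mathbb{Z}^\infty_*} e^{-\rho|\ell|_\eta} \le C\exp\left(\frac{\tau}{\rho^{1/\eta}}\ln\frac{\tau}{\rho}\right)$, where the sum runs over all finitely supported integer sequences $\ell$ and $|\ell|_\eta = \sum_i \langle i\rangle^\eta|\ell_i|$. In particular the sum is finite for every $\rho > 0$. -/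
open scoped BigOperators

/-- The weighted norm `|ℓ|_η = ∑_i ⟨i⟩^η |ℓ_i|` on finitely supported integer sequences. -/
noncomputable def wnorm (η : ℝ) (ℓ : ℕ →₀ ℤ) : ℝ :=
  ∑ i ∈ ℓ.support, ((i : ℝ) + 1) ^ η * |(ℓ i : ℝ)|

/-!
With `⟨i⟩ = i + 1`, the summand factorizes over the sites, `e^{-ρ|ℓ|_η} = ∏ᵢ e^{-ρ⟨i⟩^η |ℓᵢ|}`,
so every partial sum is bounded by a finite product of the one-site sums
`∑_{h ∈ ℤ} e^{-x|h|} = 1 + 2 / (e^x - 1)` with `x = ρ⟨i⟩^η`.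
Put `N = ⌈ρ^{-1/η}⌉`. The at most `N` factors with `i < N` are each `≤ 3/ρ`, contributing
`exp (N log (3/ρ))`. For `i ≥ N` we have `x = (⟨i⟩ρ^{1/η})^η ≥ 1`, the factor is
`≤ exp (4e^{-x})`, and `e^{-u^η} ≤ K/u²` for `u ≥ 1` makes these contribute only
`exp (4K ∑_{i ≥ N} ρ^{-2/η}/⟨i⟩²) ≤ exp (4K ρ^{-1/η})`.
-/

open Finset

theorem Finset.prod_sum_eq_sum_finsupp {ι α R : Type*} [Zero α] [CommSemiring R]
    (s : Finset ι) (t : ι → Finset α) (f : ι → α → R) :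
    ∏ i ∈ s, ∑ a ∈ t i, f i a = ∑ ℓ ∈ s.finsupp t, ∏ i ∈ s, f i (ℓ i) := by
  classical
  rw [prod_sum, Finset.finsupp, sum_map]
  refine sum_congr rfl fun p _ => ?_
  rw [← prod_attach s]
  exact prod_congr rfl fun i _ => by simp [Finsupp.indicator_of_mem i.2]

theorem exists_sum_finsupp_prod_le_prod {ι α : Type*} [Zero α] {g : ι → α → ℝ} {B : ι → ℝ}
    (hg_nonneg : ∀ i a, 0 ≤ g i a) (hg_zero : ∀ i, g i 0 = 1)
    (hB : ∀ i (F : Finset α), ∑ a ∈ F, g i a ≤ B i) (s : Finset (ι →₀ α)) :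
    ∃ T : Finset ι, ∑ ℓ ∈ s, ℓ.prod g ≤ ∏ i ∈ T, B i := by
  classical
  -- `s` lies in a box `T.finsupp t`, over which the sum of products factorizes
  set T := s.sup Finsupp.support
  set t : ι → Finset α := fun i => s.image (· i)
  have hsub : s ⊆ T.finsupp t := fun ℓ hℓ =>
    mem_finsupp_iff.2 ⟨le_sup (f := Finsupp.support) hℓ, fun i _ => mem_image_of_mem _ hℓ⟩
  refine ⟨T, ?_⟩
  calc ∑ ℓ ∈ s, ℓ.prod g
      ≤ ∑ ℓ ∈ T.finsupp t, ℓ.prod g :=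
        sum_le_sum_of_subset_of_nonneg hsub fun ℓ _ _ => prod_nonneg fun i _ => hg_nonneg _ _
    _ = ∑ ℓ ∈ T.finsupp t, ∏ i ∈ T, g i (ℓ i) :=
        sum_congr rfl fun ℓ hℓ =>
          Finsupp.prod_of_support_subset _ (mem_finsupp_iff.1 hℓ).1 _ fun i _ => hg_zero i
    _ = ∏ i ∈ T, ∑ a ∈ t i, g i a := (prod_sum_eq_sum_finsupp T t g).symm
    _ ≤ ∏ i ∈ T, B i :=
        prod_le_prod (fun i _ => sum_nonneg fun a _ => hg_nonneg i a) fun i _ => hB i (t i)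

theorem hasSum_exp_neg_mul_abs {x : ℝ} (hx : 0 < x) :
    HasSum (fun h : ℤ => Real.exp (-(x * |(h : ℝ)|))) (1 + 2 / (Real.exp x - 1)) := by
  have hr1 : Real.exp (-x) < 1 := Real.exp_lt_one_iff.2 (neg_lt_zero.2 hx)
  have hpow : ∀ n : ℕ, Real.exp (-(x * |(n : ℝ)|)) = Real.exp (-x) ^ n := fun n => by
    rw [abs_of_nonneg n.cast_nonneg, ← Real.exp_nat_mul]; ring_nf
  have hgeom := hasSum_geometric_of_lt_one (Real.exp_pos _).le hr1
  have hnat : HasSum (fun n : ℕ => Real.exp (-(x * |((n : ℤ) : ℝ)|))) (1 - Real.exp (-x))⁻¹ := by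
    simp only [Int.cast_natCast, hpow]
    exact hgeom
  have hneg : HasSum (fun n : ℕ => Real.exp (-(x * |((-(n + 1) : ℤ) : ℝ)|)))
      (Real.exp (-x) * (1 - Real.exp (-x))⁻¹) := by
    have e : ∀ n : ℕ, |((-(n + 1) : ℤ) : ℝ)| = |((n + 1 : ℕ) : ℝ)| := fun n => by
      push_cast; rw [abs_neg]
    simp only [e, hpow, pow_succ']
    exact hgeom.mul_left _
  convert HasSum.of_nat_of_neg_add_one (f := fun h : ℤ => Real.exp (-(x * |(h : ℝ)|))) hnat hneg
    using 1
  have : Real.exp x - 1 ≠ 0 := (sub_pos.2 (Real.one_lt_exp_iff.2 hx)).ne'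
  rw [Real.exp_neg]
  field_simp
  ring

theorem exists_exp_neg_rpow_le {η : ℝ} (hη : 0 < η) :
    ∃ K > 0, ∀ u : ℝ, 1 ≤ u → Real.exp (-u ^ η) ≤ K / u ^ 2 := by
  set k := ⌈2 / η⌉₊
  have hk : 2 ≤ η * k := by
    have := Nat.le_ceil (2 / η)
    rwa [div_le_iff₀ hη, mul_comm] at this
  refine ⟨k.factorial, by positivity, fun u hu => ?_⟩
  have hy : 0 < u ^ η := by positivity
  have hpow : u ^ 2 ≤ (u ^ η) ^ k := by
    rw [← Real.rpow_natCast (u ^ η), ← Real.rpow_mul (by linarith), ← Real.rpow_two]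
    exact Real.rpow_le_rpow_of_exponent_le hu hk
  calc Real.exp (-u ^ η) ≤ k.factorial / (u ^ η) ^ k := by
        rw [Real.exp_neg, inv_le_comm₀ (Real.exp_pos _) (by positivity), inv_div]
        exact Real.pow_div_factorial_le_exp _ hy.le k
    _ ≤ k.factorial / u ^ 2 := by gcongr

theorem one_add_two_div_exp_sub_one_nonneg {x : ℝ} (hx : 0 ≤ x) :
    0 ≤ 1 + 2 / (Real.exp x - 1) :=
  add_nonneg zero_le_one (div_nonneg zero_le_two (sub_nonneg.2 (Real.one_le_exp hx)))

theorem one_add_two_div_exp_sub_one_le_three_div {ρ x : ℝ} (hρ : 0 < ρ) (hρ1 : ρ ≤ 1)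
    (hx : ρ ≤ x) : 1 + 2 / (Real.exp x - 1) ≤ 3 / ρ := by
  calc 1 + 2 / (Real.exp x - 1) ≤ 1 + 2 / ρ := by
        gcongr
        linarith [Real.add_one_le_exp x]
    _ ≤ 3 / ρ := by
        rw [le_div_iff₀ hρ, add_mul, div_mul_cancel₀ _ hρ.ne']
        linarith

theorem one_add_two_div_exp_sub_one_le_exp {x : ℝ} (hx : 1 ≤ x) :
    1 + 2 / (Real.exp x - 1) ≤ Real.exp (4 * Real.exp (-x)) := by
  have h2 : 2 ≤ Real.exp x := by linarith [Real.add_one_le_exp x]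
  calc 1 + 2 / (Real.exp x - 1) ≤ 1 + 4 * Real.exp (-x) := by
        rw [Real.exp_neg, ← div_eq_mul_inv, add_le_add_iff_left,
          div_le_div_iff₀ (by linarith) (by linarith)]
        linarith
    _ ≤ Real.exp (4 * Real.exp (-x)) := by linarith [Real.add_one_le_exp (4 * Real.exp (-x))]

theorem sum_inv_sq_succ_le {N : ℕ} (hN : N ≠ 0) {T : Finset ℕ} (hT : ∀ i ∈ T, N ≤ i) :
    ∑ i ∈ T, (((i : ℝ) + 1) ^ 2)⁻¹ ≤ (N : ℝ)⁻¹ := by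
  set M := N + T.sup id + 1
  have hsub : T.image (· + 1 : ℕ → ℕ) ⊆ Ioc N M := by
    intro j hj
    obtain ⟨i, hi, rfl⟩ := mem_image.1 hj
    have := le_sup (f := id) hi
    simp only [mem_Ioc, id] at this ⊢
    have := hT i hi
    omega
  calc ∑ i ∈ T, (((i : ℝ) + 1) ^ 2)⁻¹
      = ∑ j ∈ T.image (· + 1 : ℕ → ℕ), (((j : ℕ) : ℝ) ^ 2)⁻¹ := by
        rw [sum_image fun _ _ _ _ h => Nat.add_right_cancel h]
        push_cast; rfl
    _ ≤ ∑ j ∈ Ioc N M, (((j : ℕ) : ℝ) ^ 2)⁻¹ :=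
        sum_le_sum_of_subset_of_nonneg hsub fun _ _ _ => by positivity
    _ ≤ (N : ℝ)⁻¹ - (M : ℝ)⁻¹ := sum_Ioc_inv_sq_le_sub hN (by omega)
    _ ≤ (N : ℝ)⁻¹ := sub_le_self _ (by positivity)

theorem mul_log_three_div_add_le {ρ P K n : ℝ} (hρ : 0 < ρ) (hρ1 : ρ ≤ 1) (hP : 0 < P)
    (hK0 : 0 ≤ K) (hn : n ≤ 2 / P) :
    n * Real.log (3 / ρ) + 4 * K / P ≤ (3 + 4 * K) / P * Real.log ((3 + 4 * K) / ρ) := by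
  set L := Real.log ((3 + 4 * K) / ρ)
  have h3ρ : 1 ≤ 3 / ρ := by rw [le_div_iff₀ hρ]; linarith
  have hlog : Real.log (3 / ρ) ≤ L :=
    Real.log_le_log (by positivity) (div_le_div_of_nonneg_right (by linarith) hρ.le)
  have hL : 1 ≤ L := by
    have : 3 ≤ (3 + 4 * K) / ρ := by rw [le_div_iff₀ hρ]; nlinarith
    rw [Real.le_log_iff_exp_le (by positivity)]
    linarith [Real.exp_one_lt_d9]
  have h1 : n * Real.log (3 / ρ) ≤ 2 / P * L :=
    mul_le_mul hn hlog (Real.log_nonneg h3ρ) (by positivity)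
  have h2 : 4 * K / P ≤ 4 * K / P * L := le_mul_of_one_le_right (by positivity) hL
  have h3 : (3 + 4 * K) / P * L = 2 / P * L + 4 * K / P * L + L / P := by ring
  have h4 : 0 ≤ L / P := by positivity
  linarith

section

variable {η ρ : ℝ}

theorem prod_one_add_two_div_exp_sub_one_le_pow (hη : 0 < η) (hρ : 0 < ρ) (hρ1 : ρ ≤ 1)
    (T : Finset ℕ) :
    ∏ i ∈ T, (1 + 2 / (Real.exp (ρ * ((i : ℝ) + 1) ^ η) - 1)) ≤ (3 / ρ) ^ #T := by
  rw [← prod_const]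
  refine prod_le_prod (fun i _ => one_add_two_div_exp_sub_one_nonneg (by positivity))
    fun i _ => one_add_two_div_exp_sub_one_le_three_div hρ hρ1 ?_
  have : (1 : ℝ) ≤ i + 1 := by linarith [i.cast_nonneg (α := ℝ)]
  exact le_mul_of_one_le_right hρ.le (Real.one_le_rpow this hη.le)

theorem prod_one_add_two_div_exp_sub_one_le_exp {P K : ℝ} (hη : 0 < η) (hP : 0 < P)
    (hPη : P ^ η = ρ) (hK0 : 0 ≤ K)
    (hK : ∀ u : ℝ, 1 ≤ u → Real.exp (-u ^ η) ≤ K / u ^ 2) {N : ℕ}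
    (hNP : 1 ≤ N * P) (T : Finset ℕ) (hT : ∀ i ∈ T, N ≤ i) :
    ∏ i ∈ T, (1 + 2 / (Real.exp (ρ * ((i : ℝ) + 1) ^ η) - 1)) ≤ Real.exp (4 * K / P) := by
  have hN : N ≠ 0 := by rintro rfl; simp at hNP; linarith
  have hu : ∀ i ∈ T, 1 ≤ ((i : ℝ) + 1) * P := fun i hi =>
    hNP.trans (by gcongr; exact_mod_cast (hT i hi).trans (Nat.le_succ i))
  have hx : ∀ i : ℕ, ρ * ((i : ℝ) + 1) ^ η = (((i : ℝ) + 1) * P) ^ η := fun i => by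
    rw [Real.mul_rpow (by positivity) hP.le, hPη, mul_comm]
  calc ∏ i ∈ T, (1 + 2 / (Real.exp (ρ * ((i : ℝ) + 1) ^ η) - 1))
      ≤ ∏ i ∈ T, Real.exp (4 * Real.exp (-(((i : ℝ) + 1) * P) ^ η)) := by
        refine prod_le_prod
          (fun i _ => one_add_two_div_exp_sub_one_nonneg (by rw [hx]; positivity)) fun i hi => ?_
        rw [hx]
        exact one_add_two_div_exp_sub_one_le_exp (Real.one_le_rpow (hu i hi) hη.le)
    _ = Real.exp (4 * ∑ i ∈ T, Real.exp (-(((i : ℝ) + 1) * P) ^ η)) := by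
        rw [← Real.exp_sum, mul_sum]
    _ ≤ Real.exp (4 * ∑ i ∈ T, K / P ^ 2 * (((i : ℝ) + 1) ^ 2)⁻¹) := by
        gcongr with i hi
        exact (hK _ (hu i hi)).trans_eq (by rw [mul_pow]; field_simp)
    _ ≤ Real.exp (4 * (K / P ^ 2 * (N : ℝ)⁻¹)) := by
        rw [← mul_sum]
        gcongr
        exact sum_inv_sq_succ_le hN hT
    _ = Real.exp (4 * K / P * (N * P)⁻¹) := by ring_nf
    _ ≤ Real.exp (4 * K / P) := by
        gcongr
        exact mul_le_of_le_one_right (by have := hK0; positivity) (inv_le_one_of_one_le₀ hNP)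

theorem prod_one_add_two_div_exp_sub_one_le {K : ℝ} (hη : 0 < η) (hρ : 0 < ρ) (hρ1 : ρ < 1)
    (hK0 : 0 ≤ K) (hK : ∀ u : ℝ, 1 ≤ u → Real.exp (-u ^ η) ≤ K / u ^ 2) (T : Finset ℕ) :
    ∏ i ∈ T, (1 + 2 / (Real.exp (ρ * ((i : ℝ) + 1) ^ η) - 1)) ≤
      Real.exp ((3 + 4 * K) / ρ ^ (1 / η) * Real.log ((3 + 4 * K) / ρ)) := by
  set P := ρ ^ (1 / η)
  set τ := 3 + 4 * K
  have hP : 0 < P := by positivity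
  have hP1 : P ≤ 1 := Real.rpow_le_one hρ.le hρ1.le (by positivity)
  have hPη : P ^ η = ρ := by rw [← Real.rpow_mul hρ.le, one_div_mul_cancel hη.ne', Real.rpow_one]
  -- `N ≈ ρ^(-1/η)` separates the factors of size `≈ 1/ρ` from those close to `1`
  set N := ⌈P⁻¹⌉₊
  have hNP : 1 ≤ N * P := (inv_le_iff_one_le_mul₀ hP).1 (Nat.le_ceil _)
  have hN2 : (N : ℝ) ≤ 2 / P := by
    have := Nat.ceil_lt_add_one (inv_pos.2 hP).le
    have := one_le_inv₀ hP |>.2 hP1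
    rw [div_eq_mul_inv]
    linarith
  have h3ρ : 1 ≤ 3 / ρ := by rw [le_div_iff₀ hρ]; linarith
  rw [← prod_filter_mul_prod_filter_not T (· < N)]
  calc _ ≤ (3 / ρ) ^ N * Real.exp (4 * K / P) := by
        refine mul_le_mul ?_ ?_ (prod_nonneg fun i _ =>
          one_add_two_div_exp_sub_one_nonneg (by positivity)) (by positivity)
        · refine (prod_one_add_two_div_exp_sub_one_le_pow hη hρ hρ1.le _).trans ?_
          refine pow_le_pow_right₀ h3ρ ((card_le_card fun i hi => ?_).trans (card_range N).le)
          exact mem_range.2 (mem_filter.1 hi).2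
        · exact prod_one_add_two_div_exp_sub_one_le_exp hη hP hPη hK0 hK hNP _
            fun i hi => not_lt.1 (mem_filter.1 hi).2
    _ = Real.exp (N * Real.log (3 / ρ) + 4 * K / P) := by
        rw [Real.exp_add, Real.exp_nat_mul, Real.exp_log (by positivity)]
    _ ≤ Real.exp (τ / P * Real.log (τ / ρ)) :=
        Real.exp_le_exp.2 (mul_log_three_div_add_le hρ hρ1.le hP hK0 hN2)

end

theorem exp_neg_mul_wnorm_eq_prod (η ρ : ℝ) (ℓ : ℕ →₀ ℤ) :
    Real.exp (-(ρ * wnorm η ℓ)) =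
      ℓ.prod fun i h => Real.exp (-(ρ * ((i : ℝ) + 1) ^ η * |(h : ℝ)|)) := by
  rw [wnorm, mul_sum, ← sum_neg_distrib, Real.exp_sum, Finsupp.prod]
  simp only [mul_assoc]

/-- Exponential sum over finitely supported sequences. -/
theorem stmt15 (η : ℝ) (hη : 0 < η) :
    ∃ τ > (0 : ℝ), ∃ C > (0 : ℝ), ∀ ρ : ℝ, 0 < ρ → ρ < 1 →
      Summable (fun ℓ : ℕ →₀ ℤ => Real.exp (-(ρ * wnorm η ℓ))) ∧
      ∑' ℓ : ℕ →₀ ℤ, Real.exp (-(ρ * wnorm η ℓ)) ≤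
        C * Real.exp (τ / ρ ^ (1 / η) * Real.log (τ / ρ)) := by
  obtain ⟨K, hK0, hK⟩ := exists_exp_neg_rpow_le hη
  refine ⟨3 + 4 * K, by positivity, 1, one_pos, fun ρ hρ hρ1 => ?_⟩
  have hpartial : ∀ s : Finset (ℕ →₀ ℤ), ∑ ℓ ∈ s, Real.exp (-(ρ * wnorm η ℓ)) ≤
      Real.exp ((3 + 4 * K) / ρ ^ (1 / η) * Real.log ((3 + 4 * K) / ρ)) := by
    intro s
    have hx : ∀ i : ℕ, 0 < ρ * ((i : ℝ) + 1) ^ η := fun i => by positivity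
    obtain ⟨T, hT⟩ := exists_sum_finsupp_prod_le_prod (fun _ _ => (Real.exp_pos _).le)
      (fun i => by simp) (fun i F => sum_le_hasSum F (fun _ _ => (Real.exp_pos _).le)
        (hasSum_exp_neg_mul_abs (hx i))) s
    simp only [exp_neg_mul_wnorm_eq_prod]
    exact hT.trans (prod_one_add_two_div_exp_sub_one_le hη hρ hρ1 hK0.le hK T)
  have hsum := summable_of_sum_le (fun ℓ => (Real.exp_pos _).le) hpartial
  exact ⟨hsum, (one_mul (Real.exp _)).symm ▸ hsum.tsum_le_of_sum_le hpartial⟩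
end

section
/- (Truncated small-divisor product bound) Let $\eta > 0$ and $\mu_1, \mu_2 \ge 1$. There exists $C = C(\eta,\mu_1,\mu_2) > 0$ such that for all sufficiently large $N$, $\sup\left\{\prod_{i\in\mathbb{N}}(1+\langle i\rangle^{\mu_1}|\ell_i|^{\mu_2}) : \ell \in \mathbb{Z}^\infty_*,\ |\ell|_\eta < N\right\} \le (1+N)^{C N^{1/(1+\eta)}}$. -/
open scoped BigOperators

/-!
A sequence with `k` nonzero entries has `|ℓ|_η ≥ ∑_{j<k} (j+1)^η ≥ k^{1+η}/(1+η)` (the sum is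
compared with `∫₀ᵏ x^η dx`), so `|ℓ|_η ≤ N` forces `k ≤ (1+η) N^{1/(1+η)}`. Each factor is at most
`(1+N)^{μ₁/η+μ₂+1}`, because `⟨i⟩^η ≤ N` and `|ℓ_i| ≤ N`.
-/

open Finset

theorem Finset.sum_range_card_le_sum_of_monotone {M : Type*} [AddCommMonoid M] [PartialOrder M]
    [IsOrderedAddMonoid M] {g : ℕ → M} (hg : Monotone g) (s : Finset ℕ) :
    ∑ j ∈ range #s, g j ≤ ∑ i ∈ s, g i := by
  induction s using Finset.induction_on_max with
  | empty => simp
  | insert a t hlt ih =>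
    have hat : a ∉ t := fun h => lt_irrefl a (hlt a h)
    have hcard : #t ≤ a := by
      simpa using card_le_card (fun x hx => mem_range.2 (hlt x hx) : t ⊆ range a)
    rw [card_insert_of_notMem hat, sum_range_succ, sum_insert hat, add_comm (g a)]
    exact add_le_add ih (hg hcard)

theorem rpow_one_add_div_le_sum_range {η : ℝ} (hη : 0 ≤ η) (k : ℕ) :
    (k : ℝ) ^ (1 + η) / (1 + η) ≤ ∑ j ∈ range k, ((j : ℝ) + 1) ^ η := by
  have hmono : MonotoneOn (fun x : ℝ => x ^ η) (Set.Icc 0 (0 + k)) := fun x hx y _ hxy =>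
    Real.rpow_le_rpow hx.1 hxy hη
  have := hmono.integral_le_sum
  simp only [zero_add, integral_rpow (Or.inl (by linarith : (-1 : ℝ) < η))] at this
  simpa [Real.zero_rpow (by linarith : η + 1 ≠ 0), add_comm] using this

theorem one_le_abs_apply_of_mem_support {ℓ : ℕ →₀ ℤ} {i : ℕ} (hi : i ∈ ℓ.support) :
    (1 : ℝ) ≤ |(ℓ i : ℝ)| := by
  exact_mod_cast Int.one_le_abs (Finsupp.mem_support_iff.mp hi)

theorem term_le_wnorm (η : ℝ) {ℓ : ℕ →₀ ℤ} {i : ℕ} (hi : i ∈ ℓ.support) :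
    ((i : ℝ) + 1) ^ η * |(ℓ i : ℝ)| ≤ wnorm η ℓ :=
  single_le_sum (f := fun j : ℕ => ((j : ℝ) + 1) ^ η * |(ℓ j : ℝ)|) (fun _ _ => by positivity) hi

theorem card_support_rpow_le_wnorm {η : ℝ} (hη : 0 ≤ η) (ℓ : ℕ →₀ ℤ) :
    (#ℓ.support : ℝ) ^ (1 + η) ≤ (1 + η) * wnorm η ℓ := by
  have hmono : Monotone fun j : ℕ => ((j : ℝ) + 1) ^ η := fun a b hab =>
    Real.rpow_le_rpow (by positivity) (by exact_mod_cast Nat.succ_le_succ hab) hη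
  have hsum : ∑ i ∈ ℓ.support, ((i : ℝ) + 1) ^ η ≤ wnorm η ℓ :=
    sum_le_sum fun i hi => le_mul_of_one_le_right (by positivity) (one_le_abs_apply_of_mem_support hi)
  have := (rpow_one_add_div_le_sum_range hη #ℓ.support).trans
    ((sum_range_card_le_sum_of_monotone hmono _).trans hsum)
  rwa [div_le_iff₀' (by linarith)] at this

theorem card_support_le {η N : ℝ} (hη : 0 ≤ η) (hN : 0 ≤ N) {ℓ : ℕ →₀ ℤ}
    (hℓ : wnorm η ℓ ≤ N) :
    (#ℓ.support : ℝ) ≤ (1 + η) * N ^ (1 / (1 + η)) := by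
  have h1η : 1 ≤ 1 + η := by linarith
  calc (#ℓ.support : ℝ) ≤ ((1 + η) * N) ^ (1 + η)⁻¹ := by
        rw [Real.le_rpow_inv_iff_of_pos (by positivity) (by positivity) (by positivity)]
        exact (card_support_rpow_le_wnorm hη ℓ).trans (by gcongr)
    _ = (1 + η) ^ (1 / (1 + η)) * N ^ (1 / (1 + η)) := by
        rw [Real.mul_rpow (by positivity) hN, one_div]
    _ ≤ (1 + η) * N ^ (1 / (1 + η)) := by
        gcongr
        exact Real.rpow_le_self_of_one_le h1η (div_le_one_of_le₀ h1η (by positivity))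

theorem one_add_rpow_mul_rpow_le {η μ₁ μ₂ a b N : ℝ} (hη : 0 < η) (hμ₁ : 0 ≤ μ₁) (hμ₂ : 0 ≤ μ₂)
    (ha : 1 ≤ a) (hb : 1 ≤ b) (hN : a ^ η * b ≤ N) :
    1 + a ^ μ₁ * b ^ μ₂ ≤ (1 + N) ^ (μ₁ / η + μ₂ + 1) := by
  have haη : 1 ≤ a ^ η := Real.one_le_rpow ha hη.le
  have hN1 : 1 ≤ N := by nlinarith
  have ha' : a ≤ (1 + N) ^ η⁻¹ :=
    (Real.le_rpow_inv_iff_of_pos (by linarith) (by linarith) hη).2 (by nlinarith)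
  have hb' : b ≤ 1 + N := by nlinarith
  have hB : a ^ μ₁ * b ^ μ₂ ≤ (1 + N) ^ (μ₁ / η + μ₂) := by
    calc a ^ μ₁ * b ^ μ₂ ≤ ((1 + N) ^ η⁻¹) ^ μ₁ * (1 + N) ^ μ₂ := by gcongr
      _ = (1 + N) ^ (μ₁ / η + μ₂) := by
        rw [← Real.rpow_mul (by linarith), Real.rpow_add (by linarith), inv_mul_eq_div]
  have hB1 : 1 ≤ (1 + N) ^ (μ₁ / η + μ₂) := Real.one_le_rpow (by linarith) (by positivity)
  calc 1 + a ^ μ₁ * b ^ μ₂ ≤ (1 + N) * (1 + N) ^ (μ₁ / η + μ₂) := by nlinarith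
    _ = (1 + N) ^ (μ₁ / η + μ₂ + 1) := by
      rw [Real.rpow_add (by linarith) _ 1, Real.rpow_one, mul_comm]

/-- Truncated small-divisor product bound. -/
theorem stmt16 (η μ₁ μ₂ : ℝ) (hη : 0 < η) (hμ₁ : 1 ≤ μ₁) (hμ₂ : 1 ≤ μ₂) :
    ∃ C > (0 : ℝ), ∃ N₀ : ℕ, ∀ N : ℕ, N₀ ≤ N → ∀ ℓ : ℕ →₀ ℤ, wnorm η ℓ < N →
      (∏ i ∈ ℓ.support, (1 + ((i : ℝ) + 1) ^ μ₁ * |(ℓ i : ℝ)| ^ μ₂)) ≤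
        (1 + (N : ℝ)) ^ (C * (N : ℝ) ^ (1 / (1 + η))) := by
  set A := μ₁ / η + μ₂ + 1
  have hA : 0 < A := by positivity
  refine ⟨A * (1 + η), by positivity, 0, fun N _ ℓ hℓ => ?_⟩
  have hfactor (i : ℕ) (hi : i ∈ ℓ.support) :
      1 + ((i : ℝ) + 1) ^ μ₁ * |(ℓ i : ℝ)| ^ μ₂ ≤ (1 + N) ^ A :=
    one_add_rpow_mul_rpow_le hη (by linarith) (by linarith) (by simp) (one_le_abs_apply_of_mem_support hi)
      ((term_le_wnorm η hi).trans hℓ.le)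
  calc (∏ i ∈ ℓ.support, (1 + ((i : ℝ) + 1) ^ μ₁ * |(ℓ i : ℝ)| ^ μ₂))
      ≤ ∏ _i ∈ ℓ.support, (1 + (N : ℝ)) ^ A := prod_le_prod (fun _ _ => by positivity) hfactor
    _ = (1 + (N : ℝ)) ^ (A * #ℓ.support) := by
      rw [prod_const, ← Real.rpow_natCast, ← Real.rpow_mul (by positivity)]
    _ ≤ (1 + (N : ℝ)) ^ (A * (1 + η) * (N : ℝ) ^ (1 / (1 + η))) := by
      rw [mul_assoc]
      gcongr
      · simp
      · exact card_support_le hη.le (by positivity) hℓ.le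
end
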